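/- Existence criterion for the real group inverse: let A ∈ ℝ^{n×n×p} with Fourier blocks A_1,…,A_p. Then A has a real-valued group inverse A^# under the t-product if and only if every matrix A_i is group invertible; in that case bcirc(A^#) = (F_p* ⊗ I_n)·diag(A_1^#,…,A_p^#)·(F_p ⊗ I_n). -/

import Mathlib

open Matrix Complex BigOperators Kronecker

/-- A third-order tensor, represented by its frontal slices (indexed cyclically). -/
abbrev Tensor (F : Type*) (m n p : ℕ) : Type _ :=
  ZMod p → Matrix (Fin m) (Fin n) F

/-- The block-circulant matrix of a tensor: block (i,j) is slice (i - j mod p). -/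
def bcirc {F : Type*} {m n p : ℕ} (A : Tensor F m n p) :
    Matrix (ZMod p × Fin m) (ZMod p × Fin n) F :=
  Matrix.of fun ir jc => A (ir.1 - jc.1) ir.2 jc.2

/-- The t-product of tensors: (A*B)^{(i)} = ∑_j A^{(i-j)} B^{(j)}. -/
def tpr {F : Type*} [CommRing F] {m n l p : ℕ} [NeZero p]
    (A : Tensor F m n p) (B : Tensor F n l p) : Tensor F m l p :=
  fun i => ∑ j : ZMod p, A (i - j) * B j

/-- The identity tensor: first frontal slice is I_n, others are zero. -/
def tId (F : Type*) [CommRing F] (n p : ℕ) [NeZero p] : Tensor F n n p :=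
  fun i => if i = 0 then 1 else 0

/-- Tensor transpose: transpose each slice and reverse the order of slices 2..p. -/
def tT {F : Type*} {m n p : ℕ} (A : Tensor F m n p) : Tensor F n m p :=
  fun i => (A (-i))ᵀ

/-- ξ = e^{-2πi/p}. -/
noncomputable def xi (p : ℕ) : ℂ :=
  Complex.exp (-(2 * Real.pi * Complex.I) / p)

/-- The normalized DFT matrix of order p. -/
noncomputable def Fmat (p : ℕ) : Matrix (ZMod p) (ZMod p) ℂ :=
  Matrix.of fun j k => (1 / (Real.sqrt p : ℂ)) * xi p ^ (j.val * k.val)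

/-- The Fourier blocks of a complex tensor: A_i = ∑_k ξ^{(i)(k)} A^{(k)} (0-based). -/
noncomputable def fblock {m n p : ℕ} [NeZero p] (A : Tensor ℂ m n p) (i : ZMod p) :
    Matrix (Fin m) (Fin n) ℂ :=
  ∑ k : ZMod p, xi p ^ (i.val * k.val) • A k

/-- Complexification of a real tensor. -/
def cplx {m n p : ℕ} (A : Tensor ℝ m n p) : Tensor ℂ m n p :=
  fun i => (A i).map (Complex.ofReal)

/-- Block diagonal matrix with p equal-size blocks. -/
def blockDiag {m n p : ℕ} (M : ZMod p → Matrix (Fin m) (Fin n) ℂ) :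
    Matrix (ZMod p × Fin m) (ZMod p × Fin n) ℂ :=
  Matrix.of fun ir jc => if ir.1 = jc.1 then M ir.1 ir.2 jc.2 else 0

/-- Entrywise conjugation of a complex matrix. -/
def conjM {m n : ℕ} (M : Matrix (Fin m) (Fin n) ℂ) : Matrix (Fin m) (Fin n) ℂ :=
  M.map (starRingEnd ℂ)

/-- A complex matrix is real if all entries have zero imaginary part. -/
def IsRealM {m n : ℕ} (M : Matrix (Fin m) (Fin n) ℂ) : Prop :=
  ∀ r c, (M r c).im = 0

/-- The group-inverse equations for complex matrices. -/
def IsGroupInvM {n : ℕ} (M X : Matrix (Fin n) (Fin n) ℂ) : Prop :=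
  M * X * M = M ∧ X * M * X = X ∧ M * X = X * M

/-
The Fourier blocks `A_i` are the discrete Fourier transform `ZMod.dft` of the frontal slices of
`A`, and the DFT turns the t-product into the blockwise matrix product. As complexification and
the DFT are injective, `G` is a group inverse of `A` iff every block `G_i` is one of `A_i`.
Conversely, group inverses are unique and `conj A_i = A_{-i}` for real `A`, so any family of
block group inverses `X_i` satisfies `conj X_i = X_{-i}`, which makes its inverse DFT real.
The formula for `bcirc` is Fourier inversion written entrywise.
-/
open ZMod

theorem groupInverse_unique {S : Type*} [Semigroup S] {a x y : S}
    (hx : a * x * a = a ∧ x * a * x = x ∧ a * x = x * a)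
    (hy : a * y * a = a ∧ y * a * y = y ∧ a * y = y * a) : x = y := by
  obtain ⟨hxa, hxx, hxc⟩ := hx
  obtain ⟨hya, hyy, hyc⟩ := hy
  have hax : a * x = a * y := calc
    a * x = a * y * (a * x) := by rw [← mul_assoc, hya]
    _ = y * a * (x * a) := by rw [hyc, hxc]
    _ = a * y := by rw [mul_assoc, ← mul_assoc a, hxa, hyc]
  calc x = x * (a * y) := by rw [← hax, ← mul_assoc, hxx]
    _ = y := by rw [← mul_assoc, ← hxc, hax, hyc, hyy]

section

variable {m n l p : ℕ}

theorem cplx_injective : Function.Injective (cplx : Tensor ℝ m n p → Tensor ℂ m n p) :=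
  fun _ _ h => funext fun k => Matrix.map_injective Complex.ofReal_injective (congrFun h k)

theorem conjM_mul (M : Matrix (Fin m) (Fin n) ℂ) (N : Matrix (Fin n) (Fin l) ℂ) :
    conjM (M * N) = conjM M * conjM N :=
  Matrix.map_mul

theorem IsGroupInvM.conjM {M X : Matrix (Fin n) (Fin n) ℂ} (h : IsGroupInvM M X) :
    IsGroupInvM (conjM M) (conjM X) := by
  obtain ⟨h₁, h₂, h₃⟩ := h
  exact ⟨by rw [← conjM_mul, ← conjM_mul, h₁], by rw [← conjM_mul, ← conjM_mul, h₂],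
    by rw [← conjM_mul, ← conjM_mul, h₃]⟩

theorem conjM_cplx (A : Tensor ℝ m n p) (k : ZMod p) : conjM (cplx A k) = cplx A k := by
  ext r c
  simp [conjM, cplx]

theorem exists_cplx_eq_of_conjM_eq {H : Tensor ℂ m n p} (h : ∀ k, conjM (H k) = H k) :
    ∃ G : Tensor ℝ m n p, cplx G = H :=
  ⟨fun k => (H k).map Complex.re, funext fun k => by
    ext r c
    exact Complex.conj_eq_iff_re.mp (congrFun (congrFun (h k) r) c)⟩

variable [NeZero p]

theorem xi_pow_val_mul_val (a b : ZMod p) : xi p ^ (a.val * b.val) = stdAddChar (-(a * b)) := by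
  have hcast : -(a * b) = ((-(a.val * b.val : ℕ) : ℤ) : ZMod p) := by
    push_cast; simp
  rw [hcast, stdAddChar_coe, xi, ← Complex.exp_nat_mul]
  congr 1; push_cast; ring

theorem fblock_eq_dft (A : Tensor ℂ m n p) : fblock A = 𝓕 A := by
  funext i
  simp only [fblock, dft_apply, xi_pow_val_mul_val, mul_comm i]

theorem dft_tpr (A : Tensor ℂ m n p) (B : Tensor ℂ n l p) (i : ZMod p) :
    𝓕 (tpr A B) i = 𝓕 A i * 𝓕 B i := by
  have hchar (a j : ZMod p) : stdAddChar (-((a + j) * i)) =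
      stdAddChar (-(j * i)) * stdAddChar (-(a * i)) := by
    rw [← AddChar.map_add_eq_mul]; ring_nf
  simp only [dft_apply, tpr, Matrix.sum_mul, Matrix.mul_sum, Matrix.smul_mul, Matrix.mul_smul,
    smul_smul, Finset.smul_sum]
  rw [Finset.sum_comm]
  refine Finset.sum_congr rfl fun j _ => ?_
  rw [← Equiv.sum_comp (Equiv.addRight j)]
  simp only [Equiv.coe_addRight, add_sub_cancel_right, hchar]

theorem cplx_tpr (A : Tensor ℝ m n p) (B : Tensor ℝ n l p) :
    cplx (tpr A B) = tpr (cplx A) (cplx B) := by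
  funext i
  ext r c
  simp only [cplx, tpr, Matrix.map_apply, Matrix.sum_apply, Matrix.mul_apply]
  push_cast
  rfl

theorem eq_iff_dft_cplx {X Y : Tensor ℝ m n p} : X = Y ↔ ∀ i, 𝓕 (cplx X) i = 𝓕 (cplx Y) i :=
  cplx_injective.eq_iff.symm.trans (dft.injective.eq_iff.symm.trans funext_iff)

theorem isGroupInverse_tpr_iff {A G : Tensor ℝ n n p} :
    (tpr A (tpr G A) = A ∧ tpr G (tpr A G) = G ∧ tpr A G = tpr G A) ↔
      ∀ i, IsGroupInvM (𝓕 (cplx A) i) (𝓕 (cplx G) i) := by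
  simp only [eq_iff_dft_cplx (m := n) (n := n), cplx_tpr, dft_tpr, IsGroupInvM, mul_assoc,
    forall_and]

theorem dft_conjM (Φ : ZMod p → Matrix (Fin m) (Fin n) ℂ) (i : ZMod p) :
    𝓕 (fun k => conjM (Φ k)) i = conjM (𝓕 Φ (-i)) := by
  ext r c
  simp only [conjM, dft_apply, Matrix.map_apply, Matrix.sum_apply, Matrix.smul_apply, smul_eq_mul,
    map_sum, map_mul, ← AddChar.map_neg_eq_conj, mul_neg, neg_neg]

theorem conjM_dft_cplx (A : Tensor ℝ m n p) (i : ZMod p) :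
    conjM (𝓕 (cplx A) i) = 𝓕 (cplx A) (-i) := by
  simpa only [neg_neg, conjM_cplx] using (dft_conjM (cplx A) (-i)).symm

theorem exists_cplx_eq_invDFT {Ψ : ZMod p → Matrix (Fin m) (Fin n) ℂ}
    (h : ∀ i, conjM (Ψ i) = Ψ (-i)) : ∃ G : Tensor ℝ m n p, cplx G = 𝓕⁻ Ψ := by
  have hdft : 𝓕 (fun k => conjM (𝓕⁻ Ψ k)) = 𝓕 (𝓕⁻ Ψ) := funext fun i => by
    rw [dft_conjM, LinearEquiv.apply_symm_apply, h, neg_neg]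
  exact exists_cplx_eq_of_conjM_eq fun k => congrFun (dft.injective hdft) k

theorem Fmat_apply (a j : ZMod p) :
    Fmat p a j = (Real.sqrt p : ℂ)⁻¹ * stdAddChar (-(a * j)) := by
  rw [Fmat, Matrix.of_apply, one_div, xi_pow_val_mul_val]

theorem bcirc_eq_dft_blockDiag (B : Tensor ℂ m n p) :
    bcirc B = ((Fmat p)ᴴ ⊗ₖ (1 : Matrix (Fin m) (Fin m) ℂ)) * blockDiag (𝓕 B) *
      ((Fmat p) ⊗ₖ (1 : Matrix (Fin n) (Fin n) ℂ)) := by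
  have hsqrt : ((Real.sqrt p : ℂ)⁻¹) * (Real.sqrt p : ℂ)⁻¹ = (p : ℂ)⁻¹ := by
    rw [← mul_inv, ← Complex.ofReal_mul, Real.mul_self_sqrt (Nat.cast_nonneg p),
      Complex.ofReal_natCast]
  ext ⟨i, r⟩ ⟨j, c⟩
  simp only [Matrix.mul_apply, Matrix.kroneckerMap_apply, Matrix.conjTranspose_apply,
    _root_.blockDiag, Matrix.of_apply, Matrix.one_apply, Fintype.sum_prod_type, bcirc,
    mul_ite, ite_mul, mul_zero, zero_mul, mul_one, Finset.sum_ite_irrel, Finset.sum_const_zero,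
    Finset.sum_ite_eq, Finset.sum_ite_eq', Finset.mem_univ, if_true]
  have hstar (a : ZMod p) : star (Fmat p a i) = (Real.sqrt p : ℂ)⁻¹ * stdAddChar (a * i) := by
    rw [Fmat_apply, star_mul', ← starRingEnd_apply, ← starRingEnd_apply, map_inv₀,
      Complex.conj_ofReal, ← AddChar.map_neg_eq_conj, neg_neg, mul_comm]
  calc B (i - j) r c = 𝓕⁻ (𝓕 B) (i - j) r c := by rw [LinearEquiv.symm_apply_apply]
    _ = _ := by
      simp only [hstar]
      simp only [invDFT_apply, Matrix.smul_apply, Matrix.sum_apply, smul_eq_mul, Finset.mul_sum,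
        Fmat_apply]
      refine Finset.sum_congr rfl fun a _ => ?_
      rw [mul_sub, sub_eq_add_neg, AddChar.map_add_eq_mul, ← hsqrt]
      ring

end

theorem stmt16 {n p : ℕ} [NeZero p] (A : Tensor ℝ n n p) :
    ((∃ G : Tensor ℝ n n p, tpr A (tpr G A) = A ∧ tpr G (tpr A G) = G ∧
        tpr A G = tpr G A) ↔
      (∀ i : ZMod p, ∃ Gi : Matrix (Fin n) (Fin n) ℂ, IsGroupInvM (fblock (cplx A) i) Gi)) ∧
    (∀ G : Tensor ℝ n n p,
      (tpr A (tpr G A) = A ∧ tpr G (tpr A G) = G ∧ tpr A G = tpr G A) →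
      ∀ Gk : ZMod p → Matrix (Fin n) (Fin n) ℂ,
        (∀ i, IsGroupInvM (fblock (cplx A) i) (Gk i)) →
        bcirc (cplx G) =
          ((Fmat p)ᴴ ⊗ₖ (1 : Matrix (Fin n) (Fin n) ℂ)) * blockDiag Gk *
            ((Fmat p) ⊗ₖ (1 : Matrix (Fin n) (Fin n) ℂ))) := by
  rw [fblock_eq_dft]
  refine ⟨⟨fun ⟨G, hG⟩ i => ⟨_, isGroupInverse_tpr_iff.mp hG i⟩, fun h => ?_⟩,
    fun G hG Gk hGk => ?_⟩
  · choose Gc hGc using h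
    have hconj (i : ZMod p) : conjM (Gc i) = Gc (-i) := by
      have hGc' := (hGc i).conjM
      rw [conjM_dft_cplx] at hGc'
      exact groupInverse_unique hGc' (hGc (-i))
    obtain ⟨G, hG⟩ := exists_cplx_eq_invDFT hconj
    refine ⟨G, isGroupInverse_tpr_iff.mpr fun i => ?_⟩
    rw [hG, LinearEquiv.apply_symm_apply]
    exact hGc i
  · have hdft : 𝓕 (cplx G) = Gk :=
      funext fun i => groupInverse_unique (isGroupInverse_tpr_iff.mp hG i) (hGk i)
    rw [bcirc_eq_dft_blockDiag, hdft]
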